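/- Let r = (r¹,r²,r³) be a smooth solution of the diagonalized drift flux system (S) on an open set U ⊆ ℝ² with r³_x ≠ 0 on U, let κ ∈ ℕ₀, let Ω : ℝ^{κ+1} → ℝ be smooth, and set Ω̃(t,x) := Ω(ω⁰(t,x), …, ω^κ(t,x)). Then the triple λ¹ := e^{r¹−r²} Ω̃, λ² := −e^{r¹−r²} Ω̃, λ³ := e^{r¹−r²} (∂_x Ω̃)/r³_x satisfies the adjoint linearized system of (S) along r on U. -/

import Mathlib

/- STATEMENT 16: the first family of cosymmetries of (S):
(e^{r¹−r²}Ω̃, −e^{r¹−r²}Ω̃, e^{r¹−r²}(∂_x Ω̃)/r³_x) satisfies the adjoint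
linearized system of (S) along a smooth solution r with r³_x ≠ 0. -/

noncomputable section

/-- Partial derivative with respect to the first ("time") variable. -/
def pt (f : ℝ × ℝ → ℝ) (p : ℝ × ℝ) : ℝ := fderiv ℝ f p (1, 0)

/-- Partial derivative with respect to the second ("space") variable. -/
def px (f : ℝ × ℝ → ℝ) (p : ℝ × ℝ) : ℝ := fderiv ℝ f p (0, 1)

/-- ω⁰ := r³, ω^{j+1} := e^{r²−r¹} ∂_x ω^j. -/
def omegaFun (r₁ r₂ r₃ : ℝ × ℝ → ℝ) : ℕ → ℝ × ℝ → ℝ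
  | 0 => r₃
  | j + 1 => fun p => Real.exp (r₂ p - r₁ p) * px (omegaFun r₁ r₂ r₃ j) p

namespace Cosym

variable {f g : ℝ × ℝ → ℝ} {p : ℝ × ℝ} {v : ℝ × ℝ}

def pd (v : ℝ × ℝ) (f : ℝ × ℝ → ℝ) (p : ℝ × ℝ) : ℝ := fderiv ℝ f p v

lemma pt_eq (f p) : pt f p = pd (1,0) f p := rfl
lemma px_eq (f p) : px f p = pd (0,1) f p := rfl

lemma pd_mul (hf : DifferentiableAt ℝ f p) (hg : DifferentiableAt ℝ g p) :
    pd v (fun q => f q * g q) p = pd v f p * g p + f p * pd v g p := by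
  rw [pd, fderiv_fun_mul hf hg]
  simp [pd]
  ring

lemma pd_exp (hf : DifferentiableAt ℝ f p) :
    pd v (fun q => Real.exp (f q)) p = Real.exp (f p) * pd v f p := by
  rw [pd, fderiv_exp hf]; simp [pd]

lemma pd_sub (hf : DifferentiableAt ℝ f p) (hg : DifferentiableAt ℝ g p) :
    pd v (fun q => f q - g q) p = pd v f p - pd v g p := by
  rw [pd, fderiv_fun_sub hf hg]; simp [pd]

lemma pd_add (hf : DifferentiableAt ℝ f p) (hg : DifferentiableAt ℝ g p) :
    pd v (fun q => f q + g q) p = pd v f p + pd v g p := by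
  rw [pd, fderiv_fun_add hf hg]; simp [pd]

lemma pd_neg : pd v (fun q => -(f q)) p = -(pd v f p) := by
  rw [pd, fderiv_fun_neg]; simp [pd]

lemma pd_inv (hg : DifferentiableAt ℝ g p) (h0 : g p ≠ 0) :
    pd v (fun q => (g q)⁻¹) p = -(pd v g p) / (g p)^2 := by
  have h := ((hasDerivAt_inv h0).hasFDerivAt.comp p hg.hasFDerivAt)
  have h2 : fderiv ℝ (fun q => (g q)⁻¹) p
      = (ContinuousLinearMap.smulRight 1 (-(g p ^ 2)⁻¹)).comp (fderiv ℝ g p) := h.fderiv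
  rw [pd, h2]
  simp [pd]
  ring

lemma pd_div (hf : DifferentiableAt ℝ f p) (hg : DifferentiableAt ℝ g p) (h0 : g p ≠ 0) :
    pd v (fun q => f q / g q) p = (pd v f p * g p - f p * pd v g p) / (g p)^2 := by
  simp only [div_eq_mul_inv]
  have hinv : DifferentiableAt ℝ (fun q => (g q)⁻¹) p := (differentiableAt_inv h0).comp p hg
  rw [pd_mul hf hinv, pd_inv hg h0]
  field_simp
  ring

lemma pd_congr (h : f =ᶠ[nhds p] g) : pd v f p = pd v g p := by
  rw [pd, h.fderiv_eq]; rfl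

lemma pd_comp {n : ℕ} {Ω : (Fin n → ℝ) → ℝ} {g : Fin n → ℝ × ℝ → ℝ}
    (hΩ : DifferentiableAt ℝ Ω (fun j => g j p)) (hg : ∀ j, DifferentiableAt ℝ (g j) p) :
    pd v (fun q => Ω (fun j => g j q)) p
      = fderiv ℝ Ω (fun j => g j p) (fun j => pd v (g j) p) := by
  have hG : HasFDerivAt (fun q (j : Fin n) => g j q)
      (ContinuousLinearMap.pi fun j => fderiv ℝ (g j) p) p :=
    hasFDerivAt_pi.2 fun j => (hg j).hasFDerivAt
  have h : fderiv ℝ (fun q => Ω fun j => g j q) p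
      = (fderiv ℝ Ω fun j => g j p).comp (ContinuousLinearMap.pi fun j => fderiv ℝ (g j) p) :=
    (hΩ.hasFDerivAt.comp p hG).fderiv
  rw [pd, h]
  rfl




variable {f g : ℝ × ℝ → ℝ} {p : ℝ × ℝ} {v : ℝ × ℝ} {U : Set (ℝ × ℝ)}

lemma contDiffAt_px (hf : ContDiffAt ℝ (⊤ : ℕ∞) f p) : ContDiffAt ℝ (⊤ : ℕ∞) (px f) p := by
  have h1 : ContDiffAt ℝ (⊤ : ℕ∞) (fderiv ℝ f) p := hf.fderiv_right (by simp)
  exact h1.clm_apply contDiffAt_const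

lemma diffAt (hf : ContDiffAt ℝ (⊤ : ℕ∞) f p) : DifferentiableAt ℝ f p :=
  hf.differentiableAt (by simp)

/-- Schwarz: mixed partials commute for smooth functions on open sets. -/
lemma pt_px_comm (hU : IsOpen U) (hfU : ∀ q ∈ U, ContDiffAt ℝ (⊤ : ℕ∞) f q) (hp : p ∈ U) :
    pt (px f) p = px (pt f) p := by
  set f' := fderiv ℝ f with hf'def
  have hf' : ContDiffAt ℝ (⊤ : ℕ∞) f' p := (hfU p hp).fderiv_right (by simp)
  have hd : DifferentiableAt ℝ f' p := hf'.differentiableAt (by simp)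
  have hev : ∀ᶠ y in nhds p, HasFDerivAt f (f' y) y := by
    filter_upwards [hU.mem_nhds hp] with y hy
    exact ((hfU y hy).differentiableAt (by simp)).hasFDerivAt
  have hsymm := second_derivative_symmetric_of_eventually hev hd.hasFDerivAt
  have h1 : ∀ w u : ℝ × ℝ, fderiv ℝ (fun q => f' q w) p u = (fderiv ℝ f' p u) w := by
    intro w u
    have hc : HasFDerivAt (fun q => f' q w)
        ((ContinuousLinearMap.apply ℝ ℝ w).comp (fderiv ℝ f' p)) p :=
      (ContinuousLinearMap.apply ℝ ℝ w).hasFDerivAt.comp p hd.hasFDerivAt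
    rw [hc.fderiv]
    rfl
  show fderiv ℝ (fun q => f' q (0,1)) p (1,0) = fderiv ℝ (fun q => f' q (1,0)) p (0,1)
  rw [h1, h1, hsymm]




variable {g r₁ r₂ r₃ : ℝ × ℝ → ℝ} {p : ℝ × ℝ} {U : Set (ℝ × ℝ)}

lemma px_transport (hU : IsOpen U)
    (hr₁U : ∀ q ∈ U, ContDiffAt ℝ (⊤ : ℕ∞) r₁ q) (hr₂U : ∀ q ∈ U, ContDiffAt ℝ (⊤ : ℕ∞) r₂ q)
    (hsm : ∀ q ∈ U, ContDiffAt ℝ (⊤ : ℕ∞) g q)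
    (htr : ∀ q ∈ U, pt g q = -((r₁ q + r₂ q) * px g q)) (hp : p ∈ U) :
    pt (px g) p = -((px r₁ p + px r₂ p) * px g p + (r₁ p + r₂ p) * px (px g) p) := by
  have hd1 := diffAt (hr₁U p hp)
  have hd2 := diffAt (hr₂U p hp)
  have hdpx := diffAt (contDiffAt_px (hsm p hp))
  have hev : pt g =ᶠ[nhds p] fun q => -((r₁ q + r₂ q) * px g q) := by
    filter_upwards [hU.mem_nhds hp] with y hy
    exact htr y hy
  rw [pt_px_comm hU hsm hp, px_eq, pd_congr hev, pd_neg,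
    pd_mul (f := fun q => r₁ q + r₂ q) (hd1.add hd2) hdpx, pd_add hd1 hd2, ← px_eq, ← px_eq, ← px_eq]

lemma transport_step (hU : IsOpen U)
    (hr₁U : ∀ q ∈ U, ContDiffAt ℝ (⊤ : ℕ∞) r₁ q) (hr₂U : ∀ q ∈ U, ContDiffAt ℝ (⊤ : ℕ∞) r₂ q)
    (e₁ : ∀ q ∈ U, pt r₁ q = -((r₁ q + r₂ q + 1) * px r₁ q))
    (e₂ : ∀ q ∈ U, pt r₂ q = -((r₁ q + r₂ q - 1) * px r₂ q))
    (hsm : ∀ q ∈ U, ContDiffAt ℝ (⊤ : ℕ∞) g q)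
    (htr : ∀ q ∈ U, pt g q = -((r₁ q + r₂ q) * px g q)) (hp : p ∈ U) :
    pt (fun q => Real.exp (r₂ q - r₁ q) * px g q) p
      = -((r₁ p + r₂ p) * px (fun q => Real.exp (r₂ q - r₁ q) * px g q) p) := by
  have hd1 := diffAt (hr₁U p hp)
  have hd2 := diffAt (hr₂U p hp)
  have hdpx := diffAt (contDiffAt_px (hsm p hp))
  have hds : DifferentiableAt ℝ (fun q => r₂ q - r₁ q) p := hd2.sub hd1
  have hE : DifferentiableAt ℝ (fun q => Real.exp (r₂ q - r₁ q)) p := hds.exp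
  have hmix := px_transport hU hr₁U hr₂U hsm htr hp
  rw [pt_eq, px_eq, pd_mul hE hdpx, pd_mul hE hdpx, pd_exp hds, pd_exp hds,
    pd_sub hd2 hd1, pd_sub hd2 hd1]
  simp only [← pt_eq, ← px_eq]
  rw [hmix, e₁ p hp, e₂ p hp]
  ring

lemma transport_smooth (hU : IsOpen U)
    (hr₁U : ∀ q ∈ U, ContDiffAt ℝ (⊤ : ℕ∞) r₁ q) (hr₂U : ∀ q ∈ U, ContDiffAt ℝ (⊤ : ℕ∞) r₂ q)
    (hsm : ∀ q ∈ U, ContDiffAt ℝ (⊤ : ℕ∞) g q) :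
    ∀ q ∈ U, ContDiffAt ℝ (⊤ : ℕ∞) (fun q => Real.exp (r₂ q - r₁ q) * px g q) q := by
  intro q hq
  exact (((hr₂U q hq).sub (hr₁U q hq)).exp).mul (contDiffAt_px (hsm q hq))

lemma omega_smooth (hU : IsOpen U)
    (hr₁U : ∀ q ∈ U, ContDiffAt ℝ (⊤ : ℕ∞) r₁ q) (hr₂U : ∀ q ∈ U, ContDiffAt ℝ (⊤ : ℕ∞) r₂ q)
    (hr₃U : ∀ q ∈ U, ContDiffAt ℝ (⊤ : ℕ∞) r₃ q) :
    ∀ j, ∀ q ∈ U, ContDiffAt ℝ (⊤ : ℕ∞) (omegaFun r₁ r₂ r₃ j) q := by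
  intro j
  induction j with
  | zero => exact hr₃U
  | succ j ih => exact transport_smooth hU hr₁U hr₂U ih

lemma omega_transport (hU : IsOpen U)
    (hr₁U : ∀ q ∈ U, ContDiffAt ℝ (⊤ : ℕ∞) r₁ q) (hr₂U : ∀ q ∈ U, ContDiffAt ℝ (⊤ : ℕ∞) r₂ q)
    (hr₃U : ∀ q ∈ U, ContDiffAt ℝ (⊤ : ℕ∞) r₃ q)
    (e₁ : ∀ q ∈ U, pt r₁ q = -((r₁ q + r₂ q + 1) * px r₁ q))
    (e₂ : ∀ q ∈ U, pt r₂ q = -((r₁ q + r₂ q - 1) * px r₂ q))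
    (e₃ : ∀ q ∈ U, pt r₃ q = -((r₁ q + r₂ q) * px r₃ q)) :
    ∀ j, ∀ q ∈ U, pt (omegaFun r₁ r₂ r₃ j) q
      = -((r₁ q + r₂ q) * px (omegaFun r₁ r₂ r₃ j) q) := by
  intro j
  induction j with
  | zero => exact e₃
  | succ j ih =>
    intro q hq
    exact transport_step hU hr₁U hr₂U e₁ e₂
      (omega_smooth hU hr₁U hr₂U hr₃U j) ih hq

end Cosym


open Cosym in
open Cosym in
theorem first_family_cosymmetries
    (U : Set (ℝ × ℝ)) (hU : IsOpen U)
    (r₁ r₂ r₃ : ℝ × ℝ → ℝ)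
    (hr₁ : ContDiffOn ℝ (⊤ : ℕ∞) r₁ U) (hr₂ : ContDiffOn ℝ (⊤ : ℕ∞) r₂ U)
    (hr₃ : ContDiffOn ℝ (⊤ : ℕ∞) r₃ U)
    (hS₁ : ∀ p ∈ U, pt r₁ p + (r₁ p + r₂ p + 1) * px r₁ p = 0)
    (hS₂ : ∀ p ∈ U, pt r₂ p + (r₁ p + r₂ p - 1) * px r₂ p = 0)
    (hS₃ : ∀ p ∈ U, pt r₃ p + (r₁ p + r₂ p) * px r₃ p = 0)
    (hne : ∀ p ∈ U, px r₃ p ≠ 0)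
    (κ : ℕ) (Ω : (Fin (κ + 1) → ℝ) → ℝ) (hΩ : ContDiff ℝ (⊤ : ℕ∞) Ω) :
    let Ωt : ℝ × ℝ → ℝ := fun p => Ω (fun j => omegaFun r₁ r₂ r₃ j.1 p)
    let lam₁ : ℝ × ℝ → ℝ := fun p => Real.exp (r₁ p - r₂ p) * Ωt p
    let lam₂ : ℝ × ℝ → ℝ := fun p => -(Real.exp (r₁ p - r₂ p) * Ωt p)
    let lam₃ : ℝ × ℝ → ℝ := fun p => Real.exp (r₁ p - r₂ p) * px Ωt p / px r₃ p
    ∀ p ∈ U,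
      pt lam₁ p + (r₁ p + r₂ p + 1) * px lam₁ p
        = px r₂ p * (lam₂ p - lam₁ p) + px r₃ p * lam₃ p ∧
      pt lam₂ p + (r₁ p + r₂ p - 1) * px lam₂ p
        = px r₁ p * (lam₁ p - lam₂ p) + px r₃ p * lam₃ p ∧
      pt lam₃ p + (r₁ p + r₂ p) * px lam₃ p + (px r₁ p + px r₂ p) * lam₃ p = 0 := by
  intro Ωt lam₁ lam₂ lam₃ p hp
  -- pointwise smoothness
  have hr₁U : ∀ q ∈ U, ContDiffAt ℝ (⊤ : ℕ∞) r₁ q := fun q hq => hr₁.contDiffAt (hU.mem_nhds hq)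
  have hr₂U : ∀ q ∈ U, ContDiffAt ℝ (⊤ : ℕ∞) r₂ q := fun q hq => hr₂.contDiffAt (hU.mem_nhds hq)
  have hr₃U : ∀ q ∈ U, ContDiffAt ℝ (⊤ : ℕ∞) r₃ q := fun q hq => hr₃.contDiffAt (hU.mem_nhds hq)
  -- PDE in solved form
  have e₁ : ∀ q ∈ U, pt r₁ q = -((r₁ q + r₂ q + 1) * px r₁ q) := fun q hq => by
    linarith [hS₁ q hq]
  have e₂ : ∀ q ∈ U, pt r₂ q = -((r₁ q + r₂ q - 1) * px r₂ q) := fun q hq => by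
    linarith [hS₂ q hq]
  have e₃ : ∀ q ∈ U, pt r₃ q = -((r₁ q + r₂ q) * px r₃ q) := fun q hq => by
    linarith [hS₃ q hq]
  have hωsm := omega_smooth hU hr₁U hr₂U hr₃U
  have hωtr := omega_transport hU hr₁U hr₂U hr₃U e₁ e₂ e₃
  -- smoothness of Ωt
  have hΩtU : ∀ q ∈ U, ContDiffAt ℝ (⊤ : ℕ∞) Ωt q := by
    intro q hq
    exact hΩ.contDiffAt.comp q (contDiffAt_pi.2 fun j => hωsm j.1 q hq)
  -- transport of Ωt
  have hΩtr : ∀ q ∈ U, pt Ωt q = -((r₁ q + r₂ q) * px Ωt q) := by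
    intro q hq
    have hdΩ : DifferentiableAt ℝ Ω (fun j => omegaFun r₁ r₂ r₃ j.1 q) :=
      (hΩ.differentiable (by simp)).differentiableAt
    have hdg : ∀ j : Fin (κ + 1), DifferentiableAt ℝ (omegaFun r₁ r₂ r₃ j.1) q :=
      fun j => diffAt (hωsm j.1 q hq)
    have h1 : pt Ωt q = fderiv ℝ Ω (fun j => omegaFun r₁ r₂ r₃ j.1 q)
        (fun j => pd (1,0) (omegaFun r₁ r₂ r₃ j.1) q) := pd_comp hdΩ hdg
    have h2 : px Ωt q = fderiv ℝ Ω (fun j => omegaFun r₁ r₂ r₃ j.1 q)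
        (fun j => pd (0,1) (omegaFun r₁ r₂ r₃ j.1) q) := pd_comp hdΩ hdg
    have h3 : (fun j : Fin (κ + 1) => pd (1,0) (omegaFun r₁ r₂ r₃ j.1) q)
        = (-(r₁ q + r₂ q)) • (fun j => pd (0,1) (omegaFun r₁ r₂ r₃ j.1) q) := by
      funext j
      have := hωtr j.1 q hq
      simp only [Pi.smul_apply, smul_eq_mul]
      rw [show pd (1,0) (omegaFun r₁ r₂ r₃ j.1) q = pt (omegaFun r₁ r₂ r₃ j.1) q from rfl,
        this]
      rw [show pd (0,1) (omegaFun r₁ r₂ r₃ j.1) q = px (omegaFun r₁ r₂ r₃ j.1) q from rfl]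
      ring
    rw [h1, h3, map_smul, smul_eq_mul, ← h2]
    ring
  -- differentiabilities at p
  have hd1 := diffAt (hr₁U p hp)
  have hd2 := diffAt (hr₂U p hp)
  have hdΩt := diffAt (hΩtU p hp)
  have hdpxΩ := diffAt (contDiffAt_px (hΩtU p hp))
  have hdpx₃ := diffAt (contDiffAt_px (hr₃U p hp))
  have hds : DifferentiableAt ℝ (fun q => r₁ q - r₂ q) p := hd1.sub hd2
  have hE : DifferentiableAt ℝ (fun q => Real.exp (r₁ q - r₂ q)) p := hds.exp
  have hmixΩ := px_transport hU hr₁U hr₂U hΩtU hΩtr hp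
  have hmix₃ := px_transport hU hr₁U hr₂U hr₃U e₃ hp
  have hb := hne p hp
  refine ⟨?_, ?_, ?_⟩
  · -- equation 1
    show pt (fun q => Real.exp (r₁ q - r₂ q) * Ωt q) p
        + (r₁ p + r₂ p + 1) * px (fun q => Real.exp (r₁ q - r₂ q) * Ωt q) p
      = px r₂ p * (-(Real.exp (r₁ p - r₂ p) * Ωt p) - Real.exp (r₁ p - r₂ p) * Ωt p)
        + px r₃ p * (Real.exp (r₁ p - r₂ p) * px Ωt p / px r₃ p)
    rw [pt_eq, px_eq, pd_mul hE hdΩt, pd_mul hE hdΩt, pd_exp hds, pd_exp hds,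
      pd_sub hd1 hd2, pd_sub hd1 hd2]
    simp only [← pt_eq, ← px_eq]
    rw [hΩtr p hp, e₁ p hp, e₂ p hp]
    field_simp
    ring
  · -- equation 2
    show pt (fun q => -(Real.exp (r₁ q - r₂ q) * Ωt q)) p
        + (r₁ p + r₂ p - 1) * px (fun q => -(Real.exp (r₁ q - r₂ q) * Ωt q)) p
      = px r₁ p * (Real.exp (r₁ p - r₂ p) * Ωt p - -(Real.exp (r₁ p - r₂ p) * Ωt p))
        + px r₃ p * (Real.exp (r₁ p - r₂ p) * px Ωt p / px r₃ p)
    rw [pt_eq, px_eq, pd_neg, pd_neg, pd_mul hE hdΩt, pd_mul hE hdΩt, pd_exp hds,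
      pd_exp hds, pd_sub hd1 hd2, pd_sub hd1 hd2]
    simp only [← pt_eq, ← px_eq]
    rw [hΩtr p hp, e₁ p hp, e₂ p hp]
    field_simp
    ring
  · -- equation 3
    show pt (fun q => Real.exp (r₁ q - r₂ q) * px Ωt q / px r₃ q) p
        + (r₁ p + r₂ p) * px (fun q => Real.exp (r₁ q - r₂ q) * px Ωt q / px r₃ q) p
        + (px r₁ p + px r₂ p) * (Real.exp (r₁ p - r₂ p) * px Ωt p / px r₃ p) = 0
    have hnum : DifferentiableAt ℝ (fun q => Real.exp (r₁ q - r₂ q) * px Ωt q) p :=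
      hE.mul hdpxΩ
    rw [pt_eq, px_eq, pd_div hnum hdpx₃ hb, pd_div hnum hdpx₃ hb,
      pd_mul hE hdpxΩ, pd_mul hE hdpxΩ, pd_exp hds, pd_exp hds,
      pd_sub hd1 hd2, pd_sub hd1 hd2]
    simp only [← pt_eq, ← px_eq]
    rw [hmixΩ, hmix₃, e₁ p hp, e₂ p hp]
    field_simp
    ring

end
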